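/- arXiv:1706.00666 — 2 statements merged into one kernel-verified Lean document; each statement's English description precedes it below -/
import Mathlib

section
/- Let Z be a standard normal random variable and let Y_k ~ Beta(1/2, (k-1)/2). Then P(Y_k > 1/k) → P(Z² > 1) as k → ∞. -/
open MeasureTheory ProbabilityTheory Filter

/-- The Beta measure with parameters `a`, `b` on `ℝ`, given by its density
`x ^ (a-1) * (1-x) ^ (b-1) / B(a,b)` on `(0,1)`, where `B(a,b) = Γ(a)Γ(b)/Γ(a+b)`. -/
noncomputable def betaMeasure (a b : ℝ) : Measure ℝ :=
  (volume.restrict (Set.Ioo (0 : ℝ) 1)).withDensity fun x =>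
    ENNReal.ofReal ((Real.Gamma (a + b) / (Real.Gamma a * Real.Gamma b)) *
      x ^ (a - 1) * (1 - x) ^ (b - 1))

open Real Topology Set

/-! Substituting `x = u² / k` turns `P(Y_k > 1/k)` into the integral over `1 < u < √k` of the
density of `√(k Y_k)`, namely `c_k (1 - u²/k)^((k-3)/2)`. Log-convexity of `Γ` gives
`Γ(s + 1/2) ~ Γ(s) √s`, so `c_k → 2/√(2π)`, while `(1 - u²/k)^((k-3)/2) → exp(-u²/2)` and is
dominated by `exp(-u²/4)`. Dominated convergence then yields `2 ∫_{u>1} φ = P(|Z| > 1)`. -/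

namespace Real

lemma Gamma_midpoint_sq_le {s t : ℝ} (hs : 0 < s) (ht : 0 < t) :
    Gamma ((s + t) / 2) ^ 2 ≤ Gamma s * Gamma t := by
  have h := Gamma_mul_add_mul_le_rpow_Gamma_mul_rpow_Gamma hs ht one_half_pos one_half_pos
    (add_halves 1)
  rw [← sqrt_eq_rpow, ← sqrt_eq_rpow, ← sqrt_mul (Gamma_pos_of_pos hs).le] at h
  calc Gamma ((s + t) / 2) ^ 2 = Gamma (1 / 2 * s + 1 / 2 * t) ^ 2 := by ring_nf
    _ ≤ √(Gamma s * Gamma t) ^ 2 := pow_le_pow_left₀ (Gamma_pos_of_pos (by positivity)).le h 2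
    _ = Gamma s * Gamma t := sq_sqrt (mul_pos (Gamma_pos_of_pos hs) (Gamma_pos_of_pos ht)).le

lemma Gamma_add_half_le_Gamma_mul_sqrt {s : ℝ} (hs : 0 < s) :
    Gamma (s + 1 / 2) ≤ Gamma s * √s := by
  have h := Gamma_midpoint_sq_le hs (by positivity : 0 < s + 1)
  rw [Gamma_add_one hs.ne', show (s + (s + 1)) / 2 = s + 1 / 2 by ring] at h
  refine le_of_sq_le_sq ?_ (mul_pos (Gamma_pos_of_pos hs) (sqrt_pos.2 hs)).le
  rw [mul_pow, sq_sqrt hs.le]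
  linarith

lemma mul_Gamma_mul_sqrt_le_Gamma_add_half {s : ℝ} (hs : 0 < s) :
    s * (Gamma s * √s) ≤ (s + 1 / 2) * Gamma (s + 1 / 2) := by
  have h := Gamma_midpoint_sq_le (by positivity : 0 < s + 1 / 2) (by positivity : 0 < s + 3 / 2)
  rw [show (s + 1 / 2 + (s + 3 / 2)) / 2 = s + 1 by ring, Gamma_add_one hs.ne',
    show s + 3 / 2 = s + 1 / 2 + 1 by ring, Gamma_add_one (by positivity)] at h
  have hA : 0 < Gamma (s + 1 / 2) := Gamma_pos_of_pos (by positivity)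
  have hB : 0 < Gamma s * √s := mul_pos (Gamma_pos_of_pos hs) (sqrt_pos.2 hs)
  have hB2 : (Gamma s * √s) ^ 2 = s * Gamma s ^ 2 := by rw [mul_pow, sq_sqrt hs.le]; ring
  -- `s B² = (s Γ s)² ≤ (s + 1/2) A² ≤ (s + 1/2) A B` with `A = Γ (s + 1/2) ≤ B = Γ s √s`
  nlinarith [mul_le_mul_of_nonneg_left (Gamma_add_half_le_Gamma_mul_sqrt hs) hA.le]

lemma tendsto_Gamma_add_half_div_Gamma_mul_sqrt :
    Tendsto (fun s => Gamma (s + 1 / 2) / (Gamma s * √s)) atTop (𝓝 1) := by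
  have hlow : Tendsto (fun s : ℝ => 1 - (2 * s)⁻¹) atTop (𝓝 1) := by
    simpa using tendsto_const_nhds.sub
      (tendsto_inv_atTop_zero.comp (tendsto_id.const_mul_atTop (two_pos : (0 : ℝ) < 2)))
  refine tendsto_of_tendsto_of_tendsto_of_le_of_le' hlow tendsto_const_nhds ?_ ?_
  all_goals filter_upwards [eventually_gt_atTop 0] with s hs
  all_goals have hB : 0 < Gamma s * √s := mul_pos (Gamma_pos_of_pos hs) (sqrt_pos.2 hs)
  · have h := mul_Gamma_mul_sqrt_le_Gamma_add_half hs
    have hcoef : (1 - (2 * s)⁻¹) * (s + 1 / 2) ≤ s := by field_simp; nlinarith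
    rw [le_div_iff₀ hB]
    nlinarith
  · exact div_le_one_of_le₀ (Gamma_add_half_le_Gamma_mul_sqrt hs) hB.le

end Real

noncomputable def betaDensity (a b x : ℝ) : ℝ :=
  Gamma (a + b) / (Gamma a * Gamma b) * x ^ (a - 1) * (1 - x) ^ (b - 1)

lemma continuousOn_betaDensity {a b t : ℝ} (hb : 1 ≤ b) (ht : 0 < t) :
    ContinuousOn (betaDensity a b) (Ici t) := by
  refine (continuousOn_const.mul (continuousOn_id.rpow_const fun x hx => ?_)).mul
    ((continuousOn_const.sub continuousOn_id).rpow_const fun x _ => Or.inr (by linarith))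
  exact Or.inl (ht.trans_le hx).ne'

lemma betaDensity_nonneg {a b x : ℝ} (ha : 0 < a) (hb : 0 < b) (hx : 0 ≤ x) (hx1 : x ≤ 1) :
    0 ≤ betaDensity a b x := by
  have := Gamma_pos_of_pos ha
  have := Gamma_pos_of_pos hb
  have := Gamma_pos_of_pos (add_pos ha hb)
  unfold betaDensity
  have := rpow_nonneg hx (a - 1)
  have := rpow_nonneg (sub_nonneg.2 hx1) (b - 1)
  positivity

lemma betaMeasure_Ioi {a b t : ℝ} (ha : 0 < a) (hb : 1 ≤ b) (ht : 0 < t) (ht1 : t ≤ 1) :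
    _root_.betaMeasure a b (Ioi t) = ENNReal.ofReal (∫ x in t..1, betaDensity a b x) := by
  have hIoo : Ioi t ∩ Ioo 0 1 = Ioo t 1 := by
    rw [Ioi_inter_Ioo, max_eq_left ht.le]
  rw [_root_.betaMeasure, withDensity_apply _ measurableSet_Ioi,
    Measure.restrict_restrict measurableSet_Ioi, hIoo, intervalIntegral.integral_of_le ht1,
    integral_Ioc_eq_integral_Ioo, ofReal_integral_eq_lintegral_ofReal]
  · rfl
  · exact ((continuousOn_betaDensity hb ht).mono Icc_subset_Ici_self).integrableOn_Icc.mono_set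
      Ioo_subset_Icc_self
  · exact (ae_restrict_iff' measurableSet_Ioo).2 (ae_of_all _ fun x hx =>
      betaDensity_nonneg ha (by linarith) (ht.trans hx.1).le hx.2.le)

noncomputable def sqrtScaledBetaConst (k : ℕ) : ℝ :=
  2 * Gamma (k / 2) / (√π * Gamma ((k - 1) / 2) * √k)

noncomputable def sqrtScaledBetaPDF (k : ℕ) (u : ℝ) : ℝ :=
  sqrtScaledBetaConst k * (1 - u ^ 2 / k) ^ (((k : ℝ) - 3) / 2)

lemma betaDensity_sq_div_mul {k : ℕ} (hk : k ≠ 0) {u : ℝ} (hu : 0 < u) :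
    betaDensity (1 / 2) ((k - 1) / 2) (u ^ 2 / k) * (2 * u / k) = sqrtScaledBetaPDF k u := by
  have hk' : (0 : ℝ) < k := by positivity
  rw [betaDensity, sqrtScaledBetaPDF, sqrtScaledBetaConst, Gamma_one_half_eq,
    show 1 / 2 + ((k : ℝ) - 1) / 2 = k / 2 by ring,
    show ((k : ℝ) - 1) / 2 - 1 = (k - 3) / 2 by ring, show (1 : ℝ) / 2 - 1 = -(1 / 2) by norm_num, rpow_neg (by positivity), ← sqrt_eq_rpow,
    sqrt_div' _ hk'.le, sqrt_sq hu.le]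
  field_simp
  rw [sq_sqrt hk'.le]

lemma integral_betaDensity_eq_integral_sqrtScaledBetaPDF {k : ℕ} (hk : 3 ≤ k) :
    ∫ x in (1 / k : ℝ)..1, betaDensity (1 / 2) ((k - 1) / 2) x
      = ∫ u in Ioo 1 √k, sqrtScaledBetaPDF k u := by
  have hk' : (3 : ℝ) ≤ k := by exact_mod_cast hk
  have hsk : 1 ≤ √(k : ℝ) := one_le_sqrt.2 (by linarith)
  have hcov := intervalIntegral.integral_comp_mul_deriv' (a := 1) (b := √k)
    (f := fun u => u ^ 2 / k) (f' := fun u => 2 * u / k) (g := betaDensity (1 / 2) ((k - 1) / 2))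
    (fun u _ => by simpa using (hasDerivAt_pow 2 u).div_const (k : ℝ))
    (by fun_prop)
    ((continuousOn_betaDensity (t := 1 / k) (by linarith) (by positivity)).mono ?_)
  · rw [one_pow, sq_sqrt (by linarith), div_self (by positivity)] at hcov
    rw [← hcov, intervalIntegral.integral_of_le hsk, integral_Ioc_eq_integral_Ioo]
    refine setIntegral_congr_fun measurableSet_Ioo fun u hu => ?_
    exact betaDensity_sq_div_mul (by omega) (zero_lt_one.trans hu.1)
  · rintro _ ⟨u, hu, rfl⟩
    rw [uIcc_of_le hsk] at hu
    simp only [mem_Ici]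
    have hu1 : 1 ≤ u := hu.1
    exact div_le_div_of_nonneg_right (one_le_pow₀ hu1) (Nat.cast_nonneg k)

lemma tendsto_one_sub_sq_div_rpow (u : ℝ) :
    Tendsto (fun k : ℕ => (1 - u ^ 2 / k) ^ (((k : ℝ) - 3) / 2)) atTop (𝓝 (exp (-u ^ 2 / 2))) := by
  -- write the sequence as `(1 + g x) ^ x` at `x = (k - 3) / 2`, so that `k = 2 x + 3`
  have hx : Tendsto (fun x : ℝ => x * (-u ^ 2 / (2 * x + 3))) atTop (𝓝 (-u ^ 2 / 2)) := by
    have h : Tendsto (fun x : ℝ => -u ^ 2 / (2 + 3 * x⁻¹)) atTop (𝓝 (-u ^ 2 / (2 + 3 * 0))) :=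
      tendsto_const_nhds.div (tendsto_const_nhds.add (tendsto_inv_atTop_zero.const_mul 3))
        (by norm_num)
    rw [mul_zero, add_zero] at h
    refine h.congr' ?_
    filter_upwards [eventually_gt_atTop 0] with x hx
    field_simp
  have hk : Tendsto (fun k : ℕ => ((k : ℝ) - 3) / 2) atTop atTop :=
    (tendsto_atTop_add_const_right _ _ tendsto_natCast_atTop_atTop).atTop_div_const two_pos
  refine ((tendsto_one_add_rpow_exp_of_tendsto hx).comp hk).congr fun k => ?_
  simp only [Function.comp_apply]
  congr 1
  ring

lemma one_sub_sq_div_rpow_le_exp {x u : ℝ} (hx : 6 ≤ x) (hu : u ^ 2 ≤ x) :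
    (1 - u ^ 2 / x) ^ ((x - 3) / 2) ≤ exp (-(1 / 4) * u ^ 2) := by
  have hx0 : 0 < x := by linarith
  have hbase : 0 ≤ 1 - u ^ 2 / x := by rw [sub_nonneg, div_le_one hx0]; exact hu
  calc (1 - u ^ 2 / x) ^ ((x - 3) / 2)
      ≤ exp (-(u ^ 2 / x)) ^ ((x - 3) / 2) := by
        refine rpow_le_rpow hbase ?_ (by linarith)
        linarith [add_one_le_exp (-(u ^ 2 / x))]
    _ = exp (-(u ^ 2 / x) * ((x - 3) / 2)) := (exp_mul _ _).symm
    _ ≤ exp (-(1 / 4) * u ^ 2) := by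
        rw [exp_le_exp, neg_mul, neg_mul, neg_le_neg_iff, div_mul_div_comm,
          le_div_iff₀ (by positivity)]
        nlinarith [sq_nonneg u]

lemma sqrtScaledBetaConst_eq {k : ℕ} (hk : 2 ≤ k) :
    sqrtScaledBetaConst k = 2 * (√(2 * π))⁻¹ *
      (Gamma ((k - 1) / 2 + 1 / 2) / (Gamma ((k - 1) / 2) * √((k - 1) / 2))) * √(1 - 1 / k) := by
  have hk' : (2 : ℝ) ≤ k := by exact_mod_cast hk
  have ha : 0 < √((k : ℝ) - 1) := sqrt_pos.2 (by linarith)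
  have hG : 0 < Gamma (((k : ℝ) - 1) / 2) := Gamma_pos_of_pos (by linarith)
  have hsk : 0 < √(k : ℝ) := sqrt_pos.2 (by linarith)
  rw [show 1 - 1 / (k : ℝ) = ((k : ℝ) - 1) / k by field_simp, sqrt_div (by linarith),
    sqrt_div (by linarith), sqrt_mul zero_le_two, show ((k : ℝ) - 1) / 2 + 1 / 2 = k / 2 by ring,
    sqrtScaledBetaConst]
  field_simp

lemma tendsto_sqrtScaledBetaConst :
    Tendsto sqrtScaledBetaConst atTop (𝓝 (2 * (√(2 * π))⁻¹)) := by
  have hs : Tendsto (fun k : ℕ => ((k : ℝ) - 1) / 2) atTop atTop :=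
    (tendsto_atTop_add_const_right _ _ tendsto_natCast_atTop_atTop).atTop_div_const two_pos
  have hratio := tendsto_Gamma_add_half_div_Gamma_mul_sqrt.comp hs
  have hsqrt : Tendsto (fun k : ℕ => √(1 - 1 / k)) atTop (𝓝 1) := by
    simpa using ((tendsto_const_nhds.sub tendsto_one_div_atTop_nhds_zero_nat).sqrt :
      Tendsto (fun k : ℕ => √(1 - 1 / k)) atTop (𝓝 √(1 - 0)))
  have h := ((tendsto_const_nhds (x := 2 * (√(2 * π))⁻¹)).mul hratio).mul hsqrt
  rw [mul_one, mul_one] at h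
  refine h.congr' ?_
  filter_upwards [eventually_ge_atTop 2] with k hk
  rw [sqrtScaledBetaConst_eq hk, Function.comp_apply]

lemma tendsto_sqrtScaledBetaPDF (u : ℝ) :
    Tendsto (fun k => sqrtScaledBetaPDF k u) atTop (𝓝 (2 * gaussianPDFReal 0 1 u)) := by
  have hpdf : 2 * (√(2 * π))⁻¹ * exp (-u ^ 2 / 2) = 2 * gaussianPDFReal 0 1 u := by
    rw [gaussianPDFReal, NNReal.coe_one, mul_one, sub_zero, mul_one, mul_assoc]
  rw [← hpdf]
  exact tendsto_sqrtScaledBetaConst.mul (tendsto_one_sub_sq_div_rpow u)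

lemma continuous_sqrtScaledBetaPDF {k : ℕ} (hk : 3 ≤ k) : Continuous (sqrtScaledBetaPDF k) := by
  have hk' : (3 : ℝ) ≤ k := by exact_mod_cast hk
  exact continuous_const.mul ((continuous_const.sub ((continuous_pow 2).div_const _)).rpow_const
    fun _ => Or.inr (by linarith))

lemma abs_sqrtScaledBetaPDF_le {k : ℕ} (hk : 6 ≤ k) {u : ℝ} (hu : u ^ 2 ≤ k) :
    |sqrtScaledBetaPDF k u| ≤ sqrtScaledBetaConst k * exp (-(1 / 4) * u ^ 2) := by
  have hk' : (6 : ℝ) ≤ k := by exact_mod_cast hk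
  have hconst : 0 ≤ sqrtScaledBetaConst k := by
    have := Gamma_pos_of_pos (show (0 : ℝ) < k / 2 by positivity)
    have := Gamma_pos_of_pos (show (0 : ℝ) < (k - 1) / 2 by linarith)
    unfold sqrtScaledBetaConst
    positivity
  have hpow : 0 ≤ (1 - u ^ 2 / k) ^ (((k : ℝ) - 3) / 2) :=
    rpow_nonneg (sub_nonneg.2 ((div_le_one (by linarith)).2 hu)) _
  rw [sqrtScaledBetaPDF, abs_of_nonneg (mul_nonneg hconst hpow)]
  exact mul_le_mul_of_nonneg_left (one_sub_sq_div_rpow_le_exp hk' hu) hconst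

lemma tendsto_integral_sqrtScaledBetaPDF :
    Tendsto (fun k : ℕ => ∫ u in Ioo 1 √k, sqrtScaledBetaPDF k u) atTop
      (𝓝 (∫ u in Ioi 1, 2 * gaussianPDFReal 0 1 u)) := by
  simp_rw [← integral_indicator measurableSet_Ioo, ← integral_indicator measurableSet_Ioi]
  set C := 2 * (√(2 * π))⁻¹ + 1
  refine tendsto_integral_filter_of_dominated_convergence (fun u => C * exp (-(1 / 4) * u ^ 2))
    ?_ ?_ ((integrable_exp_neg_mul_sq (by norm_num)).const_mul C) (ae_of_all _ fun u => ?_)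
  · filter_upwards [eventually_ge_atTop 3] with k hk
    exact ((continuous_sqrtScaledBetaPDF hk).measurable.indicator
      measurableSet_Ioo).aestronglyMeasurable
  · filter_upwards [eventually_ge_atTop 6,
      tendsto_sqrtScaledBetaConst.eventually_lt_const (lt_add_one _)] with k hk hC
    refine ae_of_all _ fun u => ?_
    by_cases hu : u ∈ Ioo 1 √k
    · have hu2 : u ^ 2 ≤ k := ((lt_sqrt (by linarith [hu.1])).1 hu.2).le
      rw [indicator_of_mem hu, norm_eq_abs]
      exact (abs_sqrtScaledBetaPDF_le hk hu2).trans
        (mul_le_mul_of_nonneg_right hC.le (exp_pos _).le)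
    · rw [indicator_of_notMem hu, norm_zero]
      positivity
  · rcases le_or_gt u 1 with hu | hu
    · rw [indicator_of_notMem (notMem_Ioi.2 hu)]
      exact tendsto_const_nhds.congr fun k =>
        (indicator_of_notMem (fun h : u ∈ Ioo 1 _ => hu.not_gt h.1) _).symm
    · rw [indicator_of_mem (show u ∈ Ioi 1 from hu)]
      refine (tendsto_sqrtScaledBetaPDF u).congr' ?_
      filter_upwards [eventually_gt_atTop ⌈u ^ 2⌉₊] with k hk
      have hu2 : u ^ 2 < k := (Nat.le_ceil _).trans_lt (by exact_mod_cast hk)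
      rw [indicator_of_mem (show u ∈ Ioo 1 √k from ⟨hu, lt_sqrt_of_sq_lt hu2⟩)]

lemma gaussianReal_zero_Iio_neg (v : NNReal) (t : ℝ) :
    gaussianReal 0 v (Iio (-t)) = gaussianReal 0 v (Ioi t) := by
  conv_lhs => rw [← neg_zero, ← gaussianReal_map_neg]
  rw [Measure.map_apply measurable_neg measurableSet_Iio, neg_preimage, neg_Iio, neg_neg]

lemma gaussianReal_one_lt_sq :
    gaussianReal 0 1 {z : ℝ | 1 < z ^ 2}
      = ENNReal.ofReal (∫ u in Ioi 1, 2 * gaussianPDFReal 0 1 u) := by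
  have hset : {z : ℝ | 1 < z ^ 2} = Iio (-1) ∪ Ioi 1 := by
    ext z
    simp only [mem_ofPred_eq, one_lt_sq_iff_one_lt_abs, lt_abs, mem_union, mem_Iio, mem_Ioi]
    rw [lt_neg, or_comm]
  have hdisj : Disjoint (Iio (-1 : ℝ)) (Ioi 1) :=
    Iio_disjoint_Ioi_of_le (by norm_num)
  rw [hset, measure_union hdisj measurableSet_Ioi, gaussianReal_zero_Iio_neg, ← two_mul,
    gaussianReal_apply_eq_integral 0 one_ne_zero, integral_const_mul,
    ENNReal.ofReal_mul zero_le_two, ENNReal.ofReal_ofNat]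

theorem stmt7 :
    Tendsto (fun k : ℕ =>
        _root_.betaMeasure (1 / 2) (((k : ℝ) - 1) / 2) {y : ℝ | 1 / (k : ℝ) < y})
      atTop (nhds ((gaussianReal 0 1) {z : ℝ | 1 < z ^ 2})) := by
  rw [gaussianReal_one_lt_sq]
  refine ((ENNReal.continuous_ofReal.tendsto _).comp tendsto_integral_sqrtScaledBetaPDF).congr' ?_
  filter_upwards [eventually_ge_atTop 3] with k hk
  have hk' : (3 : ℝ) ≤ k := by exact_mod_cast hk
  rw [Function.comp_apply, ← integral_betaDensity_eq_integral_sqrtScaledBetaPDF hk]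
  exact (betaMeasure_Ioi one_half_pos (by linarith) (by positivity)
    (div_le_one_of_le₀ (by linarith) (by positivity))).symm
end

section
/- Let U be uniform on the unit sphere S^{k-1} and let V = diag(λ₁,…,λ_k) be positive definite with λ₁ ≥ λ₂ ≥ ⋯ ≥ λ_k > 0. Then P(λ₁⁻¹ U₁² ≥ (1/k)·∑_{ℓ=1}^k λ_ℓ⁻¹ U_ℓ²) ≤ P(U₁² ≥ 1/k), with equality if and only if λ₁ = λ₂ = ⋯ = λ_k. -/
/-!
On the unit sphere `∑ λ_ℓ⁻¹ U_ℓ² ≥ λ₁⁻¹ ∑ U_ℓ² = λ₁⁻¹`, so the event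
`λ₁⁻¹ U₁² ≥ (1/k) ∑ λ_ℓ⁻¹ U_ℓ²` forces `U₁² ≥ 1/k`; for equal weights the two events coincide.
If some `λ_j < λ₁`, the difference of the two events contains a nonempty relatively open subset
of the sphere (found near the point with `U₁² = 1/k`, `U_j² = 1 - 1/k`), and the uniform
measure charges every such set.
-/

open MeasureTheory

/-- The uniform probability measure on the unit sphere of `ℝ^k`, viewed as a measure on
the ambient Euclidean space: the normalized spherical part of the Lebesgue measure. -/
noncomputable def uniformSphere (k : ℕ) : Measure (EuclideanSpace ℝ (Fin k)) :=
  (((volume : Measure (EuclideanSpace ℝ (Fin k))).toSphere Set.univ)⁻¹ •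
    Measure.map Subtype.val (volume : Measure (EuclideanSpace ℝ (Fin k))).toSphere :
    Measure (EuclideanSpace ℝ (Fin k)))

open Metric Set

section Sphere

variable {ι : Type*} [Fintype ι]

lemma sum_sq_eq_one_of_mem_sphere {x : EuclideanSpace ℝ ι}
    (hx : x ∈ sphere (0 : EuclideanSpace ℝ ι) 1) : ∑ ℓ, x ℓ ^ 2 = 1 := by
  rw [← EuclideanSpace.real_norm_sq_eq, mem_sphere_zero_iff_norm.1 hx, one_pow]

lemma sum_mul_sq_single_add_single [DecidableEq ι] {i j : ι} (hij : i ≠ j) (f : ι → ℝ)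
    (a b : ℝ) :
    ∑ ℓ, f ℓ * (EuclideanSpace.single i a + EuclideanSpace.single j b) ℓ ^ 2 =
      f i * a ^ 2 + f j * b ^ 2 := by
  rw [Fintype.sum_eq_add i j hij]
  · simp [hij, hij.symm]
  · rintro ℓ ⟨hi, hj⟩
    simp [hi, hj]

lemma exists_mem_sphere_sq_eq {i j : ι} (hij : i ≠ j) {s : ℝ} (hs₀ : 0 ≤ s) (hs₁ : s ≤ 1) :
    ∃ x ∈ sphere (0 : EuclideanSpace ℝ ι) 1,
      x i ^ 2 = s ∧ ∀ f : ι → ℝ, ∑ ℓ, f ℓ * x ℓ ^ 2 = f i * s + f j * (1 - s) := by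
  classical
  set x := EuclideanSpace.single i √s + EuclideanSpace.single j √(1 - s)
  have hsum (f : ι → ℝ) : ∑ ℓ, f ℓ * x ℓ ^ 2 = f i * s + f j * (1 - s) := by
    rw [sum_mul_sq_single_add_single hij, Real.sq_sqrt hs₀, Real.sq_sqrt (sub_nonneg.2 hs₁)]
  refine ⟨x, ?_, by simp [x, hij.symm, Real.sq_sqrt hs₀], hsum⟩
  have hnorm : ‖x‖ ^ 2 = 1 := by
    rw [EuclideanSpace.real_norm_sq_eq]
    simpa using hsum 1
  rw [mem_sphere_zero_iff_norm]
  exact (pow_eq_one_iff_of_nonneg (norm_nonneg x) two_ne_zero).1 hnorm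

end Sphere

section Weighted

variable {ι : Type*} [Fintype ι] {w : ι → ℝ} {i : ι} {c : ℝ} {x : EuclideanSpace ℝ ι}

variable (w i c) in
def weightedDominance : Set (EuclideanSpace ℝ ι) :=
  {x | c * ∑ ℓ, w ℓ * x ℓ ^ 2 ≤ w i * x i ^ 2}

lemma mem_weightedDominance :
    x ∈ weightedDominance w i c ↔ c * ∑ ℓ, w ℓ * x ℓ ^ 2 ≤ w i * x i ^ 2 :=
  Iff.rfl

lemma le_sq_of_mem_weightedDominance (hc : 0 ≤ c) (hwi : 0 < w i) (hw : ∀ ℓ, w i ≤ w ℓ)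
    (hx : x ∈ sphere (0 : EuclideanSpace ℝ ι) 1) (hxA : x ∈ weightedDominance w i c) :
    c ≤ x i ^ 2 := by
  have hsum : w i ≤ ∑ ℓ, w ℓ * x ℓ ^ 2 :=
    calc w i = ∑ ℓ, w i * x ℓ ^ 2 := by
          rw [← Finset.mul_sum, sum_sq_eq_one_of_mem_sphere hx, mul_one]
      _ ≤ ∑ ℓ, w ℓ * x ℓ ^ 2 :=
        Finset.sum_le_sum fun ℓ _ => mul_le_mul_of_nonneg_right (hw ℓ) (sq_nonneg _)
  refine le_of_mul_le_mul_left ?_ hwi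
  calc w i * c = c * w i := mul_comm _ _
    _ ≤ c * ∑ ℓ, w ℓ * x ℓ ^ 2 := mul_le_mul_of_nonneg_left hsum hc
    _ ≤ w i * x i ^ 2 := mem_weightedDominance.1 hxA

lemma mem_weightedDominance_iff_of_forall_eq (hwi : 0 < w i) (hw : ∀ ℓ, w ℓ = w i)
    (hx : x ∈ sphere (0 : EuclideanSpace ℝ ι) 1) : x ∈ weightedDominance w i c ↔ c ≤ x i ^ 2 := by
  have hsum : ∑ ℓ, w ℓ * x ℓ ^ 2 = w i := by
    rw [Finset.sum_congr rfl fun ℓ _ => by rw [hw ℓ], ← Finset.mul_sum,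
      sum_sq_eq_one_of_mem_sphere hx, mul_one]
  rw [mem_weightedDominance, hsum, mul_comm, mul_le_mul_iff_right₀ hwi]

lemma exists_mem_sphere_lt_sq_and_not_mem_weightedDominance {j : ι} (hij : i ≠ j)
    (hwi : 0 < w i) (hwij : w i < w j) (hc₀ : 0 < c) (hc₁ : c < 1) :
    ∃ x ∈ sphere (0 : EuclideanSpace ℝ ι) 1,
      c < x i ^ 2 ∧ w i * x i ^ 2 < c * ∑ ℓ, w ℓ * x ℓ ^ 2 := by
  -- Take `x i ^ 2 = s`, `x j ^ 2 = 1 - s`: the defect `c (w i s + w j (1 - s)) - w i s` is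
  -- affine in `s`, positive at `s = c` and zero at `s = c * w j / D`, so any `s` in between works.
  set D := w i * (1 - c) + c * w j
  have hD : 0 < D := by have := sub_pos.2 hc₁; have := hwi.trans hwij; positivity
  have hcs : c < c * w j / D := by
    rw [lt_div_iff₀ hD]
    nlinarith [mul_lt_mul_of_pos_right hwij (sub_pos.2 hc₁)]
  have hs₁ : c * w j / D ≤ 1 := by
    rw [div_le_one hD]
    nlinarith [sub_pos.2 hc₁]
  obtain ⟨s, hcs, hs⟩ := exists_between hcs
  obtain ⟨x, hx, hxi, hsum⟩ := exists_mem_sphere_sq_eq hij (hc₀.trans hcs).le (hs.le.trans hs₁)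
  refine ⟨x, hx, hxi ▸ hcs, ?_⟩
  rw [hxi, hsum]
  have := (lt_div_iff₀ hD).1 hs
  linarith

end Weighted

lemma measure_lt_measure_of_ae_le {α : Type*} [MeasurableSpace α] {μ : Measure α}
    [IsFiniteMeasure μ] {s t u : Set α} (hst : s ≤ᵐ[μ] t) (hu : MeasurableSet u) (hut : u ⊆ t)
    (hsu : Disjoint s u) (hμu : 0 < μ u) : μ s < μ t :=
  calc μ s < μ s + μ u := ENNReal.lt_add_right (measure_ne_top μ s) hμu.ne'
    _ = μ (s ∪ u) := (measure_union hsu hu).symm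
    _ ≤ μ (t ∪ t) := measure_mono_ae (hst.union hut.eventuallyLE)
    _ = μ t := by rw [union_self]

section UniformSphere

variable {k : ℕ}

lemma uniformSphere_apply {t : Set (EuclideanSpace ℝ (Fin k))} (ht : MeasurableSet t) :
    uniformSphere k t = ((volume : Measure (EuclideanSpace ℝ (Fin k))).toSphere univ)⁻¹ *
      (volume : Measure (EuclideanSpace ℝ (Fin k))).toSphere (Subtype.val ⁻¹' t) := by
  rw [uniformSphere, Measure.smul_apply, Measure.map_apply measurable_subtype_coe ht, smul_eq_mul]

lemma isProbabilityMeasure_uniformSphere (hk : 0 < k) :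
    IsProbabilityMeasure (uniformSphere k) := by
  have : Nonempty (Fin k) := ⟨⟨0, hk⟩⟩
  refine ⟨?_⟩
  rw [uniformSphere_apply MeasurableSet.univ, preimage_univ]
  exact ENNReal.inv_mul_cancel (Measure.measure_univ_ne_zero.2 (Measure.toSphere_ne_zero _))
    (measure_ne_top _ _)

lemma ae_mem_sphere_uniformSphere :
    ∀ᵐ x ∂uniformSphere k, x ∈ sphere (0 : EuclideanSpace ℝ (Fin k)) 1 := by
  refine Measure.ae_smul_measure ?_ _
  have h := ae_map_mem_range (Subtype.val : sphere (0 : EuclideanSpace ℝ (Fin k)) 1 → _)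
    (by rw [Subtype.range_coe]; exact isClosed_sphere.measurableSet) (volume : Measure _).toSphere
  rwa [Subtype.range_coe] at h

lemma uniformSphere_pos_of_isOpen {G : Set (EuclideanSpace ℝ (Fin k))} (hG : IsOpen G)
    (hne : (G ∩ sphere (0 : EuclideanSpace ℝ (Fin k)) 1).Nonempty) : 0 < uniformSphere k G := by
  rw [uniformSphere_apply hG.measurableSet]
  refine ENNReal.mul_pos (ENNReal.inv_ne_zero.2 (measure_ne_top _ _)) ?_
  obtain ⟨x, hxG, hx⟩ := hne
  exact ((hG.preimage continuous_subtype_val).measure_pos (volume : Measure _).toSphere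
    ⟨⟨x, hx⟩, hxG⟩).ne'

variable {w : Fin k → ℝ} {i : Fin k} {c : ℝ}

lemma measurableSet_weightedDominance : MeasurableSet (weightedDominance w i c) :=
  measurableSet_le (by fun_prop) (by fun_prop)

lemma weightedDominance_ae_le (hc : 0 ≤ c) (hwi : 0 < w i) (hw : ∀ ℓ, w i ≤ w ℓ) :
    weightedDominance w i c ≤ᵐ[uniformSphere k] {x | c ≤ x i ^ 2} := by
  filter_upwards [ae_mem_sphere_uniformSphere] with x hx
  exact le_sq_of_mem_weightedDominance hc hwi hw hx

lemma weightedDominance_ae_eq (hwi : 0 < w i) (hw : ∀ ℓ, w ℓ = w i) :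
    weightedDominance w i c =ᵐ[uniformSphere k] {x | c ≤ x i ^ 2} := by
  filter_upwards [ae_mem_sphere_uniformSphere] with x hx
  exact propext (mem_weightedDominance_iff_of_forall_eq hwi hw hx)

lemma uniformSphere_weightedDominance_lt {j : Fin k} (hij : i ≠ j) (hwi : 0 < w i)
    (hwij : w i < w j) (hw : ∀ ℓ, w i ≤ w ℓ) (hc₀ : 0 < c) (hc₁ : c < 1) :
    uniformSphere k (weightedDominance w i c) < uniformSphere k {x | c ≤ x i ^ 2} := by
  have := isProbabilityMeasure_uniformSphere i.pos
  obtain ⟨p, hp, hpi, hpw⟩ :=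
    exists_mem_sphere_lt_sq_and_not_mem_weightedDominance hij hwi hwij hc₀ hc₁
  set G : Set (EuclideanSpace ℝ (Fin k)) :=
    {x | c < x i ^ 2} ∩ {x | w i * x i ^ 2 < c * ∑ ℓ, w ℓ * x ℓ ^ 2}
  have hG : IsOpen G :=
    (isOpen_lt (by fun_prop) (by fun_prop)).inter (isOpen_lt (by fun_prop) (by fun_prop))
  refine measure_lt_measure_of_ae_le (weightedDominance_ae_le hc₀.le hwi hw) hG.measurableSet
    (fun _ hx => (show c < _ from hx.1).le) ?_
    (uniformSphere_pos_of_isOpen hG ⟨p, ⟨hpi, hpw⟩, hp⟩)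
  exact disjoint_left.2 fun x hxA hxG => (hxG.2 : _ < _).not_ge (mem_weightedDominance.1 hxA)

end UniformSphere

theorem stmt15 {k : ℕ} (hk : 2 ≤ k) {Ω : Type*} [MeasurableSpace Ω] (P : Measure Ω)
    (U : Ω → EuclideanSpace ℝ (Fin k)) (hUmeas : Measurable U)
    (hlaw : P.map U = uniformSphere k) (lam : Fin k → ℝ)
    (hpos : ∀ i, 0 < lam i) (hmono : ∀ i j : Fin k, i ≤ j → lam j ≤ lam i) :
    P {ω | (1 / (k : ℝ)) * ∑ ℓ, (lam ℓ)⁻¹ * (U ω ℓ) ^ 2 ≤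
        (lam ⟨0, by omega⟩)⁻¹ * (U ω ⟨0, by omega⟩) ^ 2} ≤
      P {ω | 1 / (k : ℝ) ≤ (U ω ⟨0, by omega⟩) ^ 2} ∧
    (P {ω | (1 / (k : ℝ)) * ∑ ℓ, (lam ℓ)⁻¹ * (U ω ℓ) ^ 2 ≤
        (lam ⟨0, by omega⟩)⁻¹ * (U ω ⟨0, by omega⟩) ^ 2} =
      P {ω | 1 / (k : ℝ) ≤ (U ω ⟨0, by omega⟩) ^ 2} ↔
      ∀ i j : Fin k, lam i = lam j) := by
  set i₀ : Fin k := ⟨0, by omega⟩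
  set w : Fin k → ℝ := fun ℓ => (lam ℓ)⁻¹
  have hlaw_apply {t : Set (EuclideanSpace ℝ (Fin k))} (ht : MeasurableSet t) :
      P (U ⁻¹' t) = uniformSphere k t := by
    rw [← Measure.map_apply hUmeas ht, hlaw]
  have hB : MeasurableSet {x : EuclideanSpace ℝ (Fin k) | 1 / (k : ℝ) ≤ x i₀ ^ 2} :=
    measurableSet_le measurable_const (by fun_prop)
  show P (U ⁻¹' weightedDominance w i₀ (1 / k)) ≤ P (U ⁻¹' {x | 1 / (k : ℝ) ≤ x i₀ ^ 2}) ∧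
    (P (U ⁻¹' weightedDominance w i₀ (1 / k)) = P (U ⁻¹' {x | 1 / (k : ℝ) ≤ x i₀ ^ 2}) ↔ _)
  rw [hlaw_apply measurableSet_weightedDominance, hlaw_apply hB]
  have hwi : 0 < w i₀ := inv_pos.2 (hpos i₀)
  have hw (ℓ : Fin k) : w i₀ ≤ w ℓ := inv_anti₀ (hpos ℓ) (hmono i₀ ℓ (Nat.zero_le ℓ))
  have hc₀ : (0 : ℝ) < 1 / k := by positivity
  have hc₁ : 1 / (k : ℝ) < 1 := by rw [div_lt_one (by positivity)]; exact_mod_cast hk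
  refine ⟨measure_mono_ae (weightedDominance_ae_le hc₀.le hwi hw), fun heq => ?_,
    fun hall => measure_congr (weightedDominance_ae_eq hwi fun ℓ => by simp only [w, hall ℓ i₀])⟩
  by_contra hne
  obtain ⟨j, hj⟩ : ∃ j, lam j < lam i₀ := by
    by_contra! hmin
    exact hne fun i j => (le_antisymm (hmono i₀ i (Nat.zero_le i)) (hmin i)).trans
      (le_antisymm (hmono i₀ j (Nat.zero_le j)) (hmin j)).symm
  exact (uniformSphere_weightedDominance_lt (fun h => hj.ne (congrArg lam h).symm) hwi
    ((inv_lt_inv₀ (hpos i₀) (hpos j)).2 hj) hw hc₀ hc₁).ne heq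
end
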